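/- arXiv:2512.17006 — 5 statements merged into one kernel-verified Lean document; each statement's English description precedes it below -/
import Mathlib

section
/- The Butcher table of Table 1 satisfies all four order-4 conditions: Σ_i b_i c_i³ = 1/4; Σ_{i,j} b_i c_i a(i,j) c_j = 1/8; Σ_{i,j} b_i a(i,j) c_j² = 1/12; and Σ_{i,j,k} b_i a(i,j) a(j,k) c_k = 1/24. -/
/-!
The conditions follow from Butcher's simplifying assumptions `B(4)`: `∑ bᵢ cᵢᵏ = 1/(k+1)` for
`k ≤ 3`, `C(2)`: `(a c)ᵢ = cᵢ²/2`, and `D(1)`: `∑ᵢ bᵢ aᵢⱼ = bⱼ (1 - cⱼ)`. `D(1)` rewrites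
`∑ᵢⱼ bᵢ aᵢⱼ fⱼ` as `∑ bⱼ fⱼ - ∑ bⱼ cⱼ fⱼ`, which reduces the third and fourth conditions to
quadrature sums and the second condition; `C(2)` reduces the second one to `∑ bᵢ cᵢ³`.
Table 1 violates `C(2)` at stage 2, but `b₂ = 0`, so the weighted form
`bᵢ (a c)ᵢ = bᵢ cᵢ²/2` suffices.
-/

open Finset

/-- Coefficient matrix `a` of the paper's eight-stage sixth-order scheme (Table 1). -/
def a : Matrix (Fin 8) (Fin 8) ℚ :=
  !![0,      0,      0,      0,     0,      0,      0,     0;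
     1/6,    0,      0,      0,     0,      0,      0,     0;
     1/12,   1/12,   0,      0,     0,      0,      0,     0;
     0,      -4/33,  5/11,   0,     0,      0,      0,     0;
     -1/4,   -29/44, 31/22,  0,     0,      0,      0,     0;
     3/11,   8/33,   -4/11,  1/11,  14/33,  0,      0,     0;
     -17/48, -5/12,  1,      1,     -13/12, 11/16,  0,     0;
     20/39,  12/39,  -31/39, -1/39, 34/39,  -11/39, 16/39, 0]

/-- Weights `b` of Table 1. -/
def b : Fin 8 → ℚ := ![13/200, 0, 4/25, 11/40, 0, 11/40, 4/25, 13/200]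

/-- Abscissae `c i = Σ_j a i j` of Table 1. -/
def c : Fin 8 → ℚ := fun i => ∑ j, a i j

namespace ButcherTableau

open Matrix

variable {ι R : Type*} [Fintype ι] {A : Matrix ι ι R} {w x : ι → R}

theorem sum_sum_mul_of_D1 [CommRing R] (hD : ∀ j, ∑ i, w i * A i j = w j * (1 - x j))
    (f : ι → R) :
    ∑ i, ∑ j, w i * A i j * f j = ∑ j, w j * f j - ∑ j, w j * x j * f j := by
  rw [Finset.sum_comm, ← Finset.sum_sub_distrib]
  refine Finset.sum_congr rfl fun j _ => ?_
  rw [← Finset.sum_mul, hD]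
  ring

theorem sum_mul_mulVec_of_C2 [Field R] (hC : ∀ i, w i * (A *ᵥ x) i = w i * x i ^ 2 / 2) :
    ∑ i, w i * x i * (A *ᵥ x) i = (∑ i, w i * x i ^ 3) / 2 := by
  rw [Finset.sum_div]
  refine Finset.sum_congr rfl fun i _ => ?_
  rw [mul_right_comm, hC]
  ring

theorem sum_sum_mul_eq_sum_mul_mulVec [CommRing R] (v : ι → R) :
    ∑ i, ∑ j, v i * A i j * x j = ∑ i, v i * (A *ᵥ x) i := by
  simp only [mulVec, dotProduct, Finset.mul_sum, mul_assoc]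

theorem order_four_of_B4_C2_D1 [Field R] [CharZero R]
    (hB1 : ∑ i, w i * x i = 1 / 2) (hB2 : ∑ i, w i * x i ^ 2 = 1 / 3)
    (hB3 : ∑ i, w i * x i ^ 3 = 1 / 4)
    (hC : ∀ i, w i * (A *ᵥ x) i = w i * x i ^ 2 / 2)
    (hD : ∀ j, ∑ i, w i * A i j = w j * (1 - x j)) :
    (∑ i, w i * x i ^ 3) = 1/4 ∧
    (∑ i, ∑ j, w i * x i * A i j * x j) = 1/8 ∧
    (∑ i, ∑ j, w i * A i j * x j ^ 2) = 1/12 ∧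
    (∑ i, ∑ j, ∑ k, w i * A i j * A j k * x k) = 1/24 := by
  have hxAx : ∑ i, w i * x i * (A *ᵥ x) i = 1 / 8 := by
    rw [sum_mul_mulVec_of_C2 hC, hB3]; norm_num
  have hAx : ∑ i, w i * (A *ᵥ x) i = 1 / 6 := by
    rw [← sum_sum_mul_eq_sum_mul_mulVec, sum_sum_mul_of_D1 hD]
    simp only [mul_assoc, ← sq]
    rw [hB1, hB2]; norm_num
  refine ⟨hB3, by rwa [sum_sum_mul_eq_sum_mul_mulVec], ?_, ?_⟩
  · rw [sum_sum_mul_of_D1 hD]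
    simp only [mul_assoc, ← pow_succ']
    rw [hB2, hB3]; norm_num
  · calc ∑ i, ∑ j, ∑ k, w i * A i j * A j k * x k
        = ∑ i, ∑ j, w i * A i j * (A *ᵥ x) j := by
          simp only [mulVec, dotProduct, Finset.mul_sum, mul_assoc]
      _ = 1 / 24 := by
          rw [sum_sum_mul_of_D1 hD, hAx, hxAx]; norm_num

end ButcherTableau

theorem c_eq : c = ![0, 1/6, 1/6, 1/3, 1/2, 2/3, 5/6, 1] := by
  funext i
  fin_cases i <;> simp [c, a, Fin.sum_univ_succ] <;> norm_num

theorem sum_b_mul_c_pow {k : ℕ} (hk : k ≤ 5) : ∑ i, b i * c i ^ k = 1 / (k + 1) := by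
  rw [c_eq]
  interval_cases k <;> simp [b, Fin.sum_univ_succ] <;> norm_num

open Matrix in
theorem b_mul_a_mulVec_c (i : Fin 8) : b i * (a *ᵥ c) i = b i * c i ^ 2 / 2 := by
  rw [c_eq]
  fin_cases i <;> simp [a, b, mulVec, dotProduct, Fin.sum_univ_succ] <;> norm_num

theorem sum_b_mul_a (j : Fin 8) : ∑ i, b i * a i j = b j * (1 - c j) := by
  rw [c_eq]
  fin_cases j <;> simp [a, b, Fin.sum_univ_succ] <;> norm_num

/-- Table 1 satisfies all four order-4 conditions. -/
theorem order_conditions_4 :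
    (∑ i, b i * c i ^ 3) = 1/4 ∧
    (∑ i, ∑ j, b i * c i * a i j * c j) = 1/8 ∧
    (∑ i, ∑ j, b i * a i j * c j ^ 2) = 1/12 ∧
    (∑ i, ∑ j, ∑ k, b i * a i j * a j k * c k) = 1/24 :=
  ButcherTableau.order_four_of_B4_C2_D1
    (by simpa using (sum_b_mul_c_pow (k := 1) le_add_self).trans (by norm_num))
    ((sum_b_mul_c_pow (k := 2) (by norm_num)).trans (by norm_num))
    ((sum_b_mul_c_pow (k := 3) (by norm_num)).trans (by norm_num))
    b_mul_a_mulVec_c sum_b_mul_a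
end

section
/- The Butcher table of Table 1 satisfies all nine order-5 conditions: Σ_i b_i c_i⁴ = 1/5; Σ_{i,j} b_i c_i² a(i,j) c_j = 1/10; Σ_i b_i (Σ_j a(i,j) c_j)² = 1/20; Σ_{i,j} b_i c_i a(i,j) c_j² = 1/15; Σ_{i,j,k} b_i c_i a(i,j) a(j,k) c_k = 1/30; Σ_{i,j} b_i a(i,j) c_j³ = 1/20; Σ_{i,j,k} b_i a(i,j) c_j a(j,k) c_k = 1/40; Σ_{i,j,k} b_i a(i,j) a(j,k) c_k² = 1/60; and Σ_{i,j,k,l} b_i a(i,j) a(j,k) a(k,l) c_l = 1/120. -/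
/-!
The nodes are `c = (0, 1/6, 1/6, 1/3, 1/2, 2/3, 5/6, 1)`. The tableau satisfies Butcher's
simplifying assumptions `B(5)` and `D(1)`, and `C(2)` at every stage but the second; the defect
`∑ⱼ a₂ⱼ cⱼ - c₂² / 2 = -1/72` of that stage is invisible to the order-5 conditions because both
`b₂` and `∑ᵢ bᵢ cᵢ aᵢ₂` vanish. Under these assumptions every other order-5 condition reduces
to the quadrature moments `∑ bᵢ cᵢᵏ = 1 / (k + 1)` and to `∑ bᵢ cᵢ aᵢⱼ cⱼ² = 1/15`, which has
to be checked directly since `D(2)` fails.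
-/

open Finset

namespace RungeKutta

variable {K ι : Type*} [Field K] [Fintype ι] (A : Matrix ι ι K) (b c : ι → K)

def SimplifyingB (p : ℕ) : Prop :=
  ∀ k < p, ∑ i, b i * c i ^ k = 1 / ((k : K) + 1)

def SimplifyingD1 : Prop :=
  ∀ j, ∑ i, b i * A i j = b j * (1 - c j)

def SimplifyingC2On (w : ι → K) : Prop :=
  ∀ i, w i ≠ 0 → ∑ j, A i j * c j = c i ^ 2 / 2

variable {A b c}

theorem sum_mul_one_sub_mul (g : ι → K) :
    ∑ j, b j * (1 - c j) * g j = ∑ j, b j * g j - ∑ j, b j * c j * g j := by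
  rw [← sum_sub_distrib]
  exact sum_congr rfl fun _ _ => by ring

theorem SimplifyingB.sum_mul_one_sub_mul_pow {p : ℕ} (hB : SimplifyingB b c p) {k : ℕ}
    (hk : k + 1 < p) :
    ∑ i, b i * (1 - c i) * c i ^ k = 1 / ((k : K) + 1) - 1 / ((k : K) + 2) := by
  have hk1 := hB (k + 1) hk
  push_cast at hk1
  rw [← hB k (by omega), show (k : K) + 2 = k + 1 + 1 by ring, ← hk1, sum_mul_one_sub_mul]
  simp only [mul_assoc, ← pow_succ']

theorem sum_sum_mul_of_simplifyingD1 (hD : SimplifyingD1 A b c) (f : ι → K) :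
    ∑ i, ∑ j, b i * A i j * f j = ∑ j, b j * (1 - c j) * f j := by
  rw [sum_comm]
  refine sum_congr rfl fun j _ => ?_
  rw [← sum_mul, hD j]

theorem sum_mul_of_simplifyingC2On {w : ι → K} (hC : SimplifyingC2On A c w) (f : ι → K) :
    ∑ i, w i * f i * ∑ j, A i j * c j = ∑ i, w i * f i * (c i ^ 2 / 2) := by
  refine sum_congr rfl fun i _ => ?_
  by_cases hw : w i = 0
  · simp [hw]
  · rw [hC i hw]

variable [CharZero K]

theorem sum_bAc2 (hB : SimplifyingB b c 5) (hD : SimplifyingD1 A b c) :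
    ∑ i, ∑ j, b i * A i j * c j ^ 2 = 1 / 12 := by
  rw [sum_sum_mul_of_simplifyingD1 hD, hB.sum_mul_one_sub_mul_pow (k := 2) (by norm_num)]
  norm_num

theorem sum_bAAc (hB : SimplifyingB b c 5) (hD : SimplifyingD1 A b c)
    (hC : SimplifyingC2On A c b) :
    ∑ i, ∑ j, ∑ k, b i * A i j * A j k * c k = 1 / 24 := by
  calc ∑ i, ∑ j, ∑ k, b i * A i j * A j k * c k
      = ∑ i, ∑ j, b i * A i j * ∑ k, A j k * c k := by simp only [mul_sum, mul_assoc]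
    _ = ∑ j, b j * (1 - c j) * (c j ^ 2 / 2) := by
        rw [sum_sum_mul_of_simplifyingD1 hD, sum_mul_of_simplifyingC2On hC]
    _ = (∑ j, b j * (1 - c j) * c j ^ 2) / 2 := by
        rw [sum_div]; exact sum_congr rfl fun _ _ => by ring
    _ = 1 / 24 := by rw [hB.sum_mul_one_sub_mul_pow (by norm_num)]; norm_num

theorem sum_bc2Ac (hB : SimplifyingB b c 5) (hC : SimplifyingC2On A c b) :
    ∑ i, ∑ j, b i * c i ^ 2 * A i j * c j = 1 / 10 := by
  calc ∑ i, ∑ j, b i * c i ^ 2 * A i j * c j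
      = ∑ i, b i * c i ^ 2 * ∑ j, A i j * c j := by simp only [mul_sum, mul_assoc]
    _ = ∑ i, b i * c i ^ 2 * (c i ^ 2 / 2) := sum_mul_of_simplifyingC2On hC _
    _ = (∑ i, b i * c i ^ 4) / 2 := by rw [sum_div]; exact sum_congr rfl fun _ _ => by ring
    _ = 1 / 10 := by rw [hB 4 (by norm_num)]; norm_num

theorem sum_bAc_sq (hB : SimplifyingB b c 5) (hC : SimplifyingC2On A c b) :
    ∑ i, b i * (∑ j, A i j * c j) ^ 2 = 1 / 20 := by
  calc ∑ i, b i * (∑ j, A i j * c j) ^ 2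
      = ∑ i, b i * (∑ j, A i j * c j) * ∑ j, A i j * c j := by simp only [sq, mul_assoc]
    _ = ∑ i, b i * (c i ^ 2 / 2) * ∑ j, A i j * c j := by
        rw [sum_mul_of_simplifyingC2On hC]; exact sum_congr rfl fun _ _ => by ring
    _ = ∑ i, b i * (c i ^ 2 / 2) * (c i ^ 2 / 2) := sum_mul_of_simplifyingC2On hC _
    _ = (∑ i, b i * c i ^ 4) / 4 := by rw [sum_div]; exact sum_congr rfl fun _ _ => by ring
    _ = 1 / 20 := by rw [hB 4 (by norm_num)]; norm_num

theorem sum_bcAAc (hC : SimplifyingC2On A c fun j => ∑ i, b i * c i * A i j)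
    (hbcAc2 : ∑ i, ∑ j, b i * c i * A i j * c j ^ 2 = 1 / 15) :
    ∑ i, ∑ j, ∑ k, b i * c i * A i j * A j k * c k = 1 / 30 := by
  calc ∑ i, ∑ j, ∑ k, b i * c i * A i j * A j k * c k
      = ∑ j, (∑ i, b i * c i * A i j) * 1 * ∑ k, A j k * c k := by
        rw [sum_comm]
        refine sum_congr rfl fun j _ => ?_
        rw [mul_one, sum_mul]
        simp only [mul_sum, mul_assoc]
    _ = ∑ j, (∑ i, b i * c i * A i j) * 1 * (c j ^ 2 / 2) := sum_mul_of_simplifyingC2On hC _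
    _ = (∑ i, ∑ j, b i * c i * A i j * c j ^ 2) / 2 := by
        rw [sum_comm, sum_div]; simp only [sum_mul, sum_div, mul_one, mul_div_assoc]
    _ = 1 / 30 := by rw [hbcAc2]; norm_num

theorem sum_bAc3 (hB : SimplifyingB b c 5) (hD : SimplifyingD1 A b c) :
    ∑ i, ∑ j, b i * A i j * c j ^ 3 = 1 / 20 := by
  rw [sum_sum_mul_of_simplifyingD1 hD, hB.sum_mul_one_sub_mul_pow (by norm_num)]
  norm_num

theorem sum_bAcAc (hB : SimplifyingB b c 5) (hD : SimplifyingD1 A b c)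
    (hC : SimplifyingC2On A c b) :
    ∑ i, ∑ j, ∑ k, b i * A i j * c j * A j k * c k = 1 / 40 := by
  calc ∑ i, ∑ j, ∑ k, b i * A i j * c j * A j k * c k
      = ∑ i, ∑ j, b i * A i j * (c j * ∑ k, A j k * c k) := by simp only [mul_sum, mul_assoc]
    _ = ∑ j, b j * ((1 - c j) * c j) * ∑ k, A j k * c k := by
        rw [sum_sum_mul_of_simplifyingD1 hD]; exact sum_congr rfl fun _ _ => by ring
    _ = ∑ j, b j * ((1 - c j) * c j) * (c j ^ 2 / 2) := sum_mul_of_simplifyingC2On hC _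
    _ = (∑ j, b j * (1 - c j) * c j ^ 3) / 2 := by
        rw [sum_div]; exact sum_congr rfl fun _ _ => by ring
    _ = 1 / 40 := by rw [hB.sum_mul_one_sub_mul_pow (by norm_num)]; norm_num

theorem sum_bAAc2 (hB : SimplifyingB b c 5) (hD : SimplifyingD1 A b c)
    (hbcAc2 : ∑ i, ∑ j, b i * c i * A i j * c j ^ 2 = 1 / 15) :
    ∑ i, ∑ j, ∑ k, b i * A i j * A j k * c k ^ 2 = 1 / 60 := by
  calc ∑ i, ∑ j, ∑ k, b i * A i j * A j k * c k ^ 2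
      = ∑ i, ∑ j, b i * A i j * ∑ k, A j k * c k ^ 2 := by simp only [mul_sum, mul_assoc]
    _ = ∑ j, b j * (1 - c j) * ∑ k, A j k * c k ^ 2 := by
        rw [sum_sum_mul_of_simplifyingD1 hD]
    _ = ∑ j, ∑ k, b j * A j k * c k ^ 2 - ∑ j, ∑ k, b j * c j * A j k * c k ^ 2 := by
        rw [sum_mul_one_sub_mul]; simp only [mul_sum, mul_assoc]
    _ = 1 / 60 := by rw [sum_bAc2 hB hD, hbcAc2]; norm_num

theorem sum_bAAAc (hB : SimplifyingB b c 5) (hD : SimplifyingD1 A b c)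
    (hC : SimplifyingC2On A c b) (hC' : SimplifyingC2On A c fun j => ∑ i, b i * c i * A i j)
    (hbcAc2 : ∑ i, ∑ j, b i * c i * A i j * c j ^ 2 = 1 / 15) :
    ∑ i, ∑ j, ∑ k, ∑ l, b i * A i j * A j k * A k l * c l = 1 / 120 := by
  calc ∑ i, ∑ j, ∑ k, ∑ l, b i * A i j * A j k * A k l * c l
      = ∑ i, ∑ j, b i * A i j * ∑ k, ∑ l, A j k * A k l * c l := by
        simp only [mul_sum, mul_assoc]
    _ = ∑ j, b j * (1 - c j) * ∑ k, ∑ l, A j k * A k l * c l := by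
        rw [sum_sum_mul_of_simplifyingD1 hD]
    _ = ∑ j, ∑ k, ∑ l, b j * A j k * A k l * c l
          - ∑ j, ∑ k, ∑ l, b j * c j * A j k * A k l * c l := by
        rw [sum_mul_one_sub_mul]; simp only [mul_sum, mul_assoc]
    _ = 1 / 120 := by rw [sum_bAAc hB hD hC, sum_bcAAc hC' hbcAc2]; norm_num

theorem orderConditions_five_of_simplifying (hB : SimplifyingB b c 5) (hD : SimplifyingD1 A b c)
    (hC : SimplifyingC2On A c b) (hC' : SimplifyingC2On A c fun j => ∑ i, b i * c i * A i j)
    (hbcAc2 : ∑ i, ∑ j, b i * c i * A i j * c j ^ 2 = 1 / 15) :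
    (∑ i, b i * c i ^ 4) = 1/5 ∧
    (∑ i, ∑ j, b i * c i ^ 2 * A i j * c j) = 1/10 ∧
    (∑ i, b i * (∑ j, A i j * c j) ^ 2) = 1/20 ∧
    (∑ i, ∑ j, b i * c i * A i j * c j ^ 2) = 1/15 ∧
    (∑ i, ∑ j, ∑ k, b i * c i * A i j * A j k * c k) = 1/30 ∧
    (∑ i, ∑ j, b i * A i j * c j ^ 3) = 1/20 ∧
    (∑ i, ∑ j, ∑ k, b i * A i j * c j * A j k * c k) = 1/40 ∧
    (∑ i, ∑ j, ∑ k, b i * A i j * A j k * c k ^ 2) = 1/60 ∧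
    (∑ i, ∑ j, ∑ k, ∑ l, b i * A i j * A j k * A k l * c l) = 1/120 :=
  ⟨by rw [hB 4 (by norm_num)]; norm_num, sum_bc2Ac hB hC, sum_bAc_sq hB hC, hbcAc2,
    sum_bcAAc hC' hbcAc2, sum_bAc3 hB hD, sum_bAcAc hB hD hC, sum_bAAc2 hB hD hbcAc2,
    sum_bAAAc hB hD hC hC' hbcAc2⟩

end RungeKutta

open RungeKutta

theorem simplifyingB_table : SimplifyingB b c 5 := by
  unfold SimplifyingB
  decide +kernel

theorem simplifyingD1_table : SimplifyingD1 a b c := by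
  unfold SimplifyingD1
  decide +kernel

theorem simplifyingC2On_table_b : SimplifyingC2On a c b := by
  unfold SimplifyingC2On
  decide +kernel

theorem simplifyingC2On_table_bcA : SimplifyingC2On a c fun j => ∑ i, b i * c i * a i j := by
  unfold SimplifyingC2On
  decide +kernel

theorem sum_bcAc2_table : ∑ i, ∑ j, b i * c i * a i j * c j ^ 2 = 1 / 15 := by
  decide +kernel

/-- Table 1 satisfies all nine order-5 conditions. -/
theorem order_conditions_5 :
    (∑ i, b i * c i ^ 4) = 1/5 ∧
    (∑ i, ∑ j, b i * c i ^ 2 * a i j * c j) = 1/10 ∧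
    (∑ i, b i * (∑ j, a i j * c j) ^ 2) = 1/20 ∧
    (∑ i, ∑ j, b i * c i * a i j * c j ^ 2) = 1/15 ∧
    (∑ i, ∑ j, ∑ k, b i * c i * a i j * a j k * c k) = 1/30 ∧
    (∑ i, ∑ j, b i * a i j * c j ^ 3) = 1/20 ∧
    (∑ i, ∑ j, ∑ k, b i * a i j * c j * a j k * c k) = 1/40 ∧
    (∑ i, ∑ j, ∑ k, b i * a i j * a j k * c k ^ 2) = 1/60 ∧
    (∑ i, ∑ j, ∑ k, ∑ l, b i * a i j * a j k * a k l * c l) = 1/120 :=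
  orderConditions_five_of_simplifying simplifyingB_table simplifyingD1_table
    simplifyingC2On_table_b simplifyingC2On_table_bcA sum_bcAc2_table
end

section
/- Let s : ℕ and let a : Fin s → Fin s → ℂ be strictly lower triangular (a i j = 0 for j ≥ i), b : Fin s → ℂ arbitrary weights, and c i = Σ_j a i j. Fix λ₁, λ₂, h, u₀ ∈ ℂ and set z₁ = hλ₁, z₂ = hλ₂. Define the Lawson stages U : Fin s → ℂ recursively by U i = exp(c i · z₂) · u₀ + Σ_{j<i} a i j · exp((c i − c j) · z₂) · (z₁ · U j), and define the plain Runge–Kutta stages V : Fin s → ℂ by V i = u₀ + Σ_{j<i} a i j · (z₁ · V j). Then U i = exp(c i · z₂) · V i for every i. -/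
open Finset Complex

theorem stages_eq_mul_of_scaled_recursion {ι K : Type*} [Fintype ι] [Preorder ι]
    [DecidableLT ι] [WellFoundedLT ι] [Field K] (a : ι → ι → K) (E : ι → K)
    (hE : ∀ i, E i ≠ 0) (z u₀ : K) (U V : ι → K)
    (hU : ∀ i, U i = E i * u₀ + ∑ j ∈ univ.filter (· < i), a i j * (E i / E j) * (z * U j))
    (hV : ∀ i, V i = u₀ + ∑ j ∈ univ.filter (· < i), a i j * (z * V j)) (i : ι) :
    U i = E i * V i := by
  induction i using WellFoundedLT.induction with
  | _ i ih =>
    rw [hU, hV, mul_add, mul_sum]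
    congr 1
    refine sum_congr rfl fun j hj => ?_
    rw [ih j (mem_filter.1 hj).2]
    field_simp [hE j]

theorem lawson_stages_eq_exp_mul_rk_stages_general
    (s : ℕ) (a : Fin s → Fin s → ℂ)
    (c : Fin s → ℂ)
    (u₀ : ℂ) (z₁ z₂ : ℂ)
    (U V : Fin s → ℂ)
    (hU : ∀ i, U i = Complex.exp (c i * z₂) * u₀ +
      ∑ j ∈ Finset.univ.filter (fun j => j < i),
        a i j * Complex.exp ((c i - c j) * z₂) * (z₁ * U j))
    (hV : ∀ i, V i = u₀ +
      ∑ j ∈ Finset.univ.filter (fun j => j < i), a i j * (z₁ * V j)) :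
    ∀ i, U i = Complex.exp (c i * z₂) * V i := by
  refine stages_eq_mul_of_scaled_recursion a (fun i => exp (c i * z₂)) (fun _ => exp_ne_zero _)
    z₁ u₀ U V (fun i => ?_) hV
  simp only [hU i, sub_mul, exp_sub]

/-- for any explicit Runge–Kutta table, the Lawson stages on the scalar
test equation `ẋ = λ₁x + λ₂x` equal `exp(c i z₂)` times the plain Runge–Kutta stages. -/
theorem lawson_stages_eq_exp_mul_rk_stages
    (s : ℕ) (a : Fin s → Fin s → ℂ)
    (ha : ∀ i j : Fin s, i ≤ j → a i j = 0)
    (b : Fin s → ℂ) (c : Fin s → ℂ) (hc : ∀ i, c i = ∑ j, a i j)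
    (lam₁ lam₂ h u₀ : ℂ) (z₁ z₂ : ℂ) (hz₁ : z₁ = h * lam₁) (hz₂ : z₂ = h * lam₂)
    (U V : Fin s → ℂ)
    (hU : ∀ i, U i = Complex.exp (c i * z₂) * u₀ +
      ∑ j ∈ Finset.univ.filter (fun j => j < i),
        a i j * Complex.exp ((c i - c j) * z₂) * (z₁ * U j))
    (hV : ∀ i, V i = u₀ +
      ∑ j ∈ Finset.univ.filter (fun j => j < i), a i j * (z₁ * V j)) :
    ∀ i, U i = Complex.exp (c i * z₂) * V i :=
  lawson_stages_eq_exp_mul_rk_stages_general s a c u₀ z₁ z₂ U V hU hV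
end

section
/- Let s : ℕ and let a : Fin s → Fin s → ℂ be strictly lower triangular (a i j = 0 for j ≥ i), b : Fin s → ℂ arbitrary weights, and c i = Σ_j a i j. Fix λ₁, λ₂, h, u₀ ∈ ℂ and set z₁ = hλ₁, z₂ = hλ₂. Define the Lawson stages U : Fin s → ℂ recursively by U i = exp(c i · z₂) · u₀ + Σ_{j<i} a i j · exp((c i − c j) · z₂) · (z₁ · U j), and the Lawson update u⁺ = exp(z₂) · u₀ + Σ_i b i · exp((1 − c i) · z₂) · (z₁ · U i). Define the plain Runge–Kutta stages V : Fin s → ℂ by V i = u₀ + Σ_{j<i} a i j · (z₁ · V j) and the plain update v⁺ = u₀ + Σ_i b i · (z₁ · V i). Then u⁺ = exp(z₂) · v⁺. In other words, the linear stability function of the Lawson scheme on the two-timescale test equation ẋ = λ₁x + λ₂x is Φ_Lawson(z₁, z₂) = e^{z₂} · Φ_RK(z₁), where Φ_RK is the stability function of the underlying Runge–Kutta scheme. -/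
open Finset Complex

/-! Both schemes see `λ₁` through the same Runge–Kutta coefficients; the Lawson scheme merely
conjugates the `λ₁`-part by the exact flow of `λ₂`. By strong induction on the stage index,
`U i = exp (c i * z₂) * V i`: the factors `exp ((c i - c j) * z₂)` are exactly what turns
`exp (c j * z₂)` into `exp (c i * z₂)`, so the whole stage equation is `exp (c i * z₂)` times the
Runge–Kutta one. The same telescoping, with `1` in place of `c i`, gives the update. -/

theorem exp_sub_mul_mul_exp_mul (x y z : ℂ) :
    exp ((x - y) * z) * exp (y * z) = exp (x * z) := by
  rw [← Complex.exp_add, sub_mul, sub_add_cancel]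

theorem lawson_stage_eq_exp_mul_rk_stage {s : ℕ} (a : Fin s → Fin s → ℂ) (c : Fin s → ℂ)
    (u₀ z₁ z₂ : ℂ) (U V : Fin s → ℂ)
    (hU : ∀ i, U i = exp (c i * z₂) * u₀ +
      ∑ j ∈ univ.filter (fun j => j < i), a i j * exp ((c i - c j) * z₂) * (z₁ * U j))
    (hV : ∀ i, V i = u₀ + ∑ j ∈ univ.filter (fun j => j < i), a i j * (z₁ * V j))
    (i : Fin s) :
    U i = exp (c i * z₂) * V i := by
  induction i using Fin.strong_induction_on with
  | _ i ih =>
    rw [hU i, hV i, mul_add, mul_sum]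
    congr 1
    refine sum_congr rfl fun j hj => ?_
    rw [ih j (mem_filter.mp hj).2, ← exp_sub_mul_mul_exp_mul (c i) (c j) z₂]
    ring

theorem lawson_stability_eq_exp_mul_rk_general
    (s : ℕ) (a : Fin s → Fin s → ℂ)
    (b : Fin s → ℂ) (c : Fin s → ℂ)
    (u₀ : ℂ) (z₁ z₂ : ℂ)
    (U V : Fin s → ℂ)
    (hU : ∀ i, U i = Complex.exp (c i * z₂) * u₀ +
      ∑ j ∈ Finset.univ.filter (fun j => j < i),
        a i j * Complex.exp ((c i - c j) * z₂) * (z₁ * U j))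
    (hV : ∀ i, V i = u₀ +
      ∑ j ∈ Finset.univ.filter (fun j => j < i), a i j * (z₁ * V j))
    (uplus vplus : ℂ)
    (huplus : uplus = Complex.exp z₂ * u₀ +
      ∑ i, b i * Complex.exp ((1 - c i) * z₂) * (z₁ * U i))
    (hvplus : vplus = u₀ + ∑ i, b i * (z₁ * V i)) :
    uplus = Complex.exp z₂ * vplus := by
  have hstage := lawson_stage_eq_exp_mul_rk_stage a c u₀ z₁ z₂ U V hU hV
  rw [huplus, hvplus, mul_add, mul_sum]
  congr 1
  refine sum_congr rfl fun i _ => ?_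
  have hexp : exp ((1 - c i) * z₂) * exp (c i * z₂) = exp z₂ := by
    rw [exp_sub_mul_mul_exp_mul, one_mul]
  rw [hstage i, ← hexp]
  ring

/-- on the two-timescale test equation `ẋ = λ₁x + λ₂x`, one Lawson step
equals `e^{z₂}` times one plain Runge–Kutta step: the Lawson stability function is
`Φ_Lawson(z₁, z₂) = e^{z₂} Φ_RK(z₁)`. -/
theorem lawson_stability_eq_exp_mul_rk
    (s : ℕ) (a : Fin s → Fin s → ℂ)
    (ha : ∀ i j : Fin s, i ≤ j → a i j = 0)
    (b : Fin s → ℂ) (c : Fin s → ℂ) (hc : ∀ i, c i = ∑ j, a i j)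
    (lam₁ lam₂ h u₀ : ℂ) (z₁ z₂ : ℂ) (hz₁ : z₁ = h * lam₁) (hz₂ : z₂ = h * lam₂)
    (U V : Fin s → ℂ)
    (hU : ∀ i, U i = Complex.exp (c i * z₂) * u₀ +
      ∑ j ∈ Finset.univ.filter (fun j => j < i),
        a i j * Complex.exp ((c i - c j) * z₂) * (z₁ * U j))
    (hV : ∀ i, V i = u₀ +
      ∑ j ∈ Finset.univ.filter (fun j => j < i), a i j * (z₁ * V j))
    (uplus vplus : ℂ)
    (huplus : uplus = Complex.exp z₂ * u₀ +
      ∑ i, b i * Complex.exp ((1 - c i) * z₂) * (z₁ * U i))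
    (hvplus : vplus = u₀ + ∑ i, b i * (z₁ * V i)) :
    uplus = Complex.exp z₂ * vplus :=
  lawson_stability_eq_exp_mul_rk_general s a b c u₀ z₁ z₂ U V hU hV uplus vplus huplus hvplus
end

section
/- Lawson's change of variables: let n : ℕ, A : Matrix (Fin n) (Fin n) ℝ, g : (Fin n → ℝ) → (Fin n → ℝ), and let u : ℝ → (Fin n → ℝ) satisfy, for every t, HasDerivAt u (g (u t) + A.mulVec (u t)) t. Then the function v defined by v t = (Matrix.exp (−t • A)).mulVec (u t) satisfies, for every t, HasDerivAt v ((Matrix.exp (−t • A)).mulVec (g ((Matrix.exp (t • A)).mulVec (v t)))) t; equivalently, v′ t = exp(−tA) g(exp(tA) v t), so the stiff linear term is removed from the transformed dynamics. -/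
/-!
Since `d/ds exp (-s • A) = -(exp (-s • A) * A)`, the product rule gives
`v' = exp (-t • A) *ᵥ (u' - A *ᵥ u) = exp (-t • A) *ᵥ g u`, and `u = exp (t • A) *ᵥ v`
because `exp (t • A)` and `exp (-t • A)` are mutually inverse.
-/

open NormedSpace Matrix

section MulVec

attribute [local instance] Matrix.normedAddCommGroup Matrix.normedSpace

variable {𝕜 : Type*} [NontriviallyNormedField 𝕜] {m n : Type*} [Fintype n]

theorem HasDerivAt.matrix_mulVec {M : 𝕜 → Matrix m n 𝕜} {w : 𝕜 → n → 𝕜} {M' : Matrix m n 𝕜}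
    {w' : n → 𝕜} {t : 𝕜} (hM : HasDerivAt M M' t) (hw : HasDerivAt w w' t) :
    HasDerivAt (fun s ↦ M s *ᵥ w s) (M' *ᵥ w t + M t *ᵥ w') t := by
  refine hasDerivAt_pi.2 fun i ↦ ?_
  have hM_entry : ∀ j, HasDerivAt (fun s ↦ M s i j) (M' i j) t := fun j ↦
    hasDerivAt_pi.1 (hasDerivAt_pi.1 hM i) j
  have hsum := HasDerivAt.fun_sum (u := Finset.univ) fun j _ ↦
    (hM_entry j).mul (hasDerivAt_pi.1 hw j)
  simpa [mulVec, dotProduct, Finset.sum_add_distrib] using hsum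

end MulVec

theorem hasDerivAt_exp_neg_smul_const {𝕂 𝔸 : Type*} [RCLike 𝕂] [NormedRing 𝔸]
    [NormedAlgebra 𝕂 𝔸] [CompleteSpace 𝔸] (x : 𝔸) (t : 𝕂) :
    HasDerivAt (fun s : 𝕂 ↦ exp ((-s) • x)) (-(exp ((-t) • x) * x)) t := by
  simpa [Function.comp_def] using
    (hasDerivAt_exp_smul_const x (-t)).scomp t (hasDerivAt_neg t)

section MatrixExp

variable {𝕂 : Type*} [RCLike 𝕂] {m : Type*} [Fintype m] [DecidableEq m]

theorem exp_smul_mulVec_exp_neg_smul_mulVec (A : Matrix m m 𝕂) (t : 𝕂) (w : m → 𝕂) :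
    exp (t • A) *ᵥ exp ((-t) • A) *ᵥ w = w := by
  have hcomm : Commute (t • A) ((-t) • A) := ((Commute.refl A).smul_left t).smul_right (-t)
  rw [mulVec_mulVec, ← Matrix.exp_add_of_commute _ _ hcomm, ← add_smul]
  simp

attribute [local instance] Matrix.linftyOpNormedRing Matrix.linftyOpNormedAlgebra in
theorem hasDerivAt_exp_neg_smul_mulVec (A : Matrix m m 𝕂) {u : 𝕂 → m → 𝕂} {u' : m → 𝕂} {t : 𝕂}
    (hu : HasDerivAt u u' t) :
    HasDerivAt (fun s ↦ exp ((-s) • A) *ᵥ u s) (exp ((-t) • A) *ᵥ (u' - A *ᵥ u t)) t := by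
  refine ((hasDerivAt_exp_neg_smul_const A t).matrix_mulVec hu).congr_deriv ?_
  rw [mulVec_sub, neg_mulVec, ← mulVec_mulVec, sub_eq_neg_add]
  -- the sides differ only in instance arguments, which agree definitionally
  rfl

end MatrixExp

/-- Lawson's change of variables: if `u̇ = g(u) + Au`, then
`v t = exp(−tA) u t` satisfies `v̇ t = exp(−tA) g(exp(tA) v t)`, i.e. the stiff
linear term is removed from the transformed dynamics. -/
theorem lawson_change_of_variables
    (n : ℕ) (A : Matrix (Fin n) (Fin n) ℝ)
    (g : (Fin n → ℝ) → (Fin n → ℝ)) (u : ℝ → (Fin n → ℝ))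
    (hu : ∀ t : ℝ, HasDerivAt u (g (u t) + A.mulVec (u t)) t)
    (v : ℝ → (Fin n → ℝ))
    (hv : ∀ t : ℝ, v t = (NormedSpace.exp ((-t) • A)).mulVec (u t)) :
    ∀ t : ℝ, HasDerivAt v
      ((NormedSpace.exp ((-t) • A)).mulVec (g ((NormedSpace.exp (t • A)).mulVec (v t)))) t := by
  intro t
  rw [hv t, exp_smul_mulVec_exp_neg_smul_mulVec, funext hv]
  simpa using hasDerivAt_exp_neg_smul_mulVec A (hu t)
end
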